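/- For every c ≥ 2 and permutation π of {1,...,c}, I_π D_π is a subsequence of I_c^c D_c if and only if π(1) < π(2). -/

import Mathlib

/-- The increasing sequence `1 2 ... c`. -/
def Ic (c : ℕ) : List ℕ := List.range' 1 c

/-- The decreasing sequence `c (c-1) ... 1`. -/
def Dc (c : ℕ) : List ℕ := (Ic c).reverse

/-- `k` concatenated copies of the list `l`. -/
def rep (l : List ℕ) (k : ℕ) : List ℕ := (List.replicate k l).flatten

/-- `up(c,t)`: the sequence `1 2 ... c` repeated `t` times. -/
def upSeq (c t : ℕ) : List ℕ := rep (Ic c) t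

/-- `alt(c,k)`: the concatenation of `k` permutations alternating `I_c, D_c, I_c, ...`. -/
def altSeq (c k : ℕ) : List ℕ :=
  ((List.range k).map (fun i => if i % 2 = 0 then Ic c else Dc c)).flatten

/-- A sequence `s` contains `u` if some subsequence of `s` is obtained from `u`
by an injective renaming of its letters. -/
def Contains (s u : List ℕ) : Prop :=
  ∃ f : ℕ → ℕ, Function.Injective f ∧ (u.map f).Sublist s

/-- `F` is an `(r,s)`-formation: a concatenation of `s` permutations of a set of
`r` distinct letters. -/
def IsFormation (r s : ℕ) (F : List ℕ) : Prop :=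
  ∃ (A : Finset ℕ) (ps : List (List ℕ)), A.card = r ∧ ps.length = s ∧
    (∀ p ∈ ps, p.Nodup ∧ p.toFinset = A) ∧ F = ps.flatten

/-- `F` is a binary `(r,s)`-formation: an `(r,s)`-formation in which every
constituent permutation equals a fixed permutation `p` or its reverse. -/
def IsBinaryFormation (r s : ℕ) (F : List ℕ) : Prop :=
  ∃ (A : Finset ℕ) (p : List ℕ) (ps : List (List ℕ)), A.card = r ∧
    p.Nodup ∧ p.toFinset = A ∧ ps.length = s ∧
    (∀ q ∈ ps, q = p ∨ q = p.reverse) ∧ F = ps.flatten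

/-- The formation width of `u`: the minimum `s` such that there exists `r` for which
every `(r,s)`-formation contains `u`. -/
noncomputable def fw (u : List ℕ) : ℕ :=
  sInf {s | ∃ r, ∀ F, IsFormation r s F → Contains F u}

/-- The formation length of `u`: the minimum `r` such that every `(r, fw u)`-formation
contains `u`. -/
noncomputable def fl (u : List ℕ) : ℕ :=
  sInf {r | ∀ F, IsFormation r (fw u) F → Contains F u}

/-- For a permutation `π` of `{1,...,c}`, the sequence `I_π = π(1) π(2) ... π(c)`. -/
def Iperm {c : ℕ} (π : Equiv.Perm (Fin c)) : List ℕ :=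
  List.ofFn (fun i => (π i).val + 1)

/-- `l(u)` for a sequence `u` on letters `1,...,c`: the smallest `k` such that
`up(c,k)` contains `u`. -/
noncomputable def lval (c : ℕ) (u : List ℕ) : ℕ := sInf {k | Contains (upSeq c k) u}

/-- `r(u)` for a sequence `u` on letters `1,...,c`: the smallest `k` such that
`alt(c,k)` contains `u`. -/
noncomputable def rval (c : ℕ) (u : List ℕ) : ℕ := sInf {k | Contains (altSeq c k) u}

/-- The binary formation `I_c^{e_1} D_c^{e_2} I_c^{e_3} ...` determined by the list
of exponents `e` (blocks alternate starting with `I_c`). -/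
def altBlocks (c : ℕ) (e : List ℕ) : List ℕ :=
  ((e.zipIdx.map Prod.swap).map (fun p => rep (if p.1 % 2 = 0 then Ic c else Dc c) p.2)).flatten

/-!
Call a pair of adjacent letters `x y` of a word a weak descent if `y ≤ x`. A nonempty word `w`
whose letters occur in a strictly increasing word `s` is a subsequence of `s^k` exactly when `w`
has fewer than `k` weak descents: a weak descent cannot occur inside one copy of `s`, and
conversely a greedy left-to-right embedding starts a new copy of `s` only at weak descents.

Write `I_π = a b r` and `m = b r`, so that `I_π D_π = a (m m^R) a`. Since `m` has no repeated
letters, each of its `c - 2` adjacent pairs is a weak descent of exactly one of `m` and `m^R`; with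
the repeated letter in the middle, `m m^R` has `c - 1` weak descents, and `a (m m^R)` has `c` of
them if `b < a` and `c - 1` otherwise.
If `a < b`, then `a (m m^R)` embeds in `I_c^c` and the final `a` in `D_c`. Conversely, the part of
`I_π D_π` embedded in `D_c` is decreasing; if it has at least two letters, reading the palindrome
`I_π D_π` backwards shows `a < b`, and otherwise `a (m m^R)` embeds in `I_c^c`, forcing `a < b`.
-/

def weakDescents : List ℕ → ℕ
  | [] => 0
  | [_] => 0
  | a :: b :: t => (if b ≤ a then 1 else 0) + weakDescents (b :: t)

@[simp]
lemma weakDescents_cons_cons (a b : ℕ) (t : List ℕ) :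
    weakDescents (a :: b :: t) = (if b ≤ a then 1 else 0) + weakDescents (b :: t) := rfl

lemma weakDescents_append_cons : ∀ (u : List ℕ) (a : ℕ) (v : List ℕ),
    weakDescents (u ++ a :: v) = weakDescents (u ++ [a]) + weakDescents (a :: v)
  | [], _, _ => by simp [weakDescents]
  | [_], _, _ => by simp [weakDescents]
  | x :: y :: u, a, v => by
    have ih := weakDescents_append_cons (y :: u) a v
    simp only [List.cons_append, weakDescents_cons_cons] at *
    omega

lemma weakDescents_le_append : ∀ (u v : List ℕ), weakDescents u ≤ weakDescents (u ++ v)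
  | [], _ => Nat.zero_le _
  | [_], _ => Nat.zero_le _
  | x :: y :: u, v => by
    have ih := weakDescents_le_append (y :: u) v
    simp only [List.cons_append, weakDescents_cons_cons] at *
    omega

lemma List.IsPrefix.weakDescents_le {u v : List ℕ} (h : u <+: v) :
    weakDescents u ≤ weakDescents v := by
  obtain ⟨t, rfl⟩ := h
  exact weakDescents_le_append u t

lemma weakDescents_append_le : ∀ (u v : List ℕ),
    weakDescents (u ++ v) ≤ weakDescents u + weakDescents v + 1
  | [], _ => by simp [weakDescents]
  | [_], [] => by simp [weakDescents]
  | [_], _ :: _ => by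
    simp only [List.cons_append, List.nil_append, weakDescents_cons_cons, weakDescents]
    split <;> omega
  | x :: y :: u, v => by
    have ih := weakDescents_append_le (y :: u) v
    simp only [List.cons_append, weakDescents_cons_cons] at *
    omega

lemma weakDescents_eq_zero_of_pairwise : ∀ {l : List ℕ}, l.Pairwise (· < ·) → weakDescents l = 0
  | [], _ => rfl
  | [_], _ => rfl
  | a :: b :: t, h => by
    obtain ⟨hab, hbt⟩ := List.pairwise_cons.1 h
    simp [weakDescents_eq_zero_of_pairwise hbt, hab b List.mem_cons_self]

lemma weakDescents_reverse_cons_cons (a b : ℕ) (t : List ℕ) :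
    weakDescents (a :: b :: t).reverse = weakDescents (b :: t).reverse + (if a ≤ b then 1 else 0) := by
  rw [List.reverse_cons, List.reverse_cons, List.append_assoc, List.singleton_append,
    weakDescents_append_cons]
  simp [weakDescents]

lemma weakDescents_add_weakDescents_reverse :
    ∀ {l : List ℕ}, l.Nodup → weakDescents l + weakDescents l.reverse = l.length - 1
  | [], _ => rfl
  | [_], _ => rfl
  | a :: b :: t, h => by
    have hab : a ≠ b := fun hab => by simp [hab] at h
    have ih := weakDescents_add_weakDescents_reverse h.of_cons
    rw [weakDescents_cons_cons, weakDescents_reverse_cons_cons]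
    simp only [List.length_cons] at *
    split_ifs <;> omega

lemma weakDescents_append_reverse {l : List ℕ} (h : l.Nodup) (hl : l ≠ []) :
    weakDescents (l ++ l.reverse) = l.length := by
  obtain ⟨u, x, rfl⟩ := List.eq_nil_or_concat l |>.resolve_left hl
  have hsum := weakDescents_add_weakDescents_reverse h
  simp only [List.concat_eq_append, List.reverse_append, List.reverse_singleton,
    List.singleton_append, List.length_append, List.length_singleton] at hsum ⊢
  rw [weakDescents_append_cons, List.append_assoc, List.singleton_append, weakDescents_append_cons]
  simp only [weakDescents, le_refl, if_true] at hsum ⊢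
  omega

lemma rep_succ (l : List ℕ) (k : ℕ) : rep l (k + 1) = l ++ rep l k := by
  simp [rep, List.replicate_succ]

lemma pairwise_Ic (c : ℕ) : (Ic c).Pairwise (· < ·) := List.pairwise_lt_range'

lemma weakDescents_lt_of_sublist_rep {s : List ℕ} (hs : s.Pairwise (· < ·)) :
    ∀ {k : ℕ} {w : List ℕ}, w ≠ [] → w.Sublist (rep s k) → weakDescents w < k
  | 0, w, hw, h => absurd (List.eq_nil_of_sublist_nil (by simpa [rep] using h)) hw
  | k + 1, w, hw, h => by
    rw [rep_succ, List.sublist_append_iff] at h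
    obtain ⟨u, v, rfl, hu, hv⟩ := h
    have hu0 := weakDescents_eq_zero_of_pairwise (hs.sublist hu)
    have huv := weakDescents_append_le u v
    rcases eq_or_ne v [] with rfl | hv0
    · simp [hu0]
    · have := weakDescents_lt_of_sublist_rep hs hv0 hv
      omega

lemma sublist_of_pairwise_of_subset {l₁ l₂ : List ℕ} (h₁ : l₁.Pairwise (· < ·))
    (h₂ : l₂.Pairwise (· < ·)) (h : l₁ ⊆ l₂) : l₁.Sublist l₂ :=
  List.sublist_of_subperm_of_pairwise (List.subperm_of_subset h₁.nodup h) h₁ h₂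

/-- Greedy embedding: the first letter `a` goes into the current copy of `s` at or after `a`,
and a new copy of `s` is opened exactly at each weak descent. -/
lemma cons_sublist_filter_append_rep {s : List ℕ} (hs : s.Pairwise (· < ·)) :
    ∀ {a : ℕ} {w : List ℕ}, a :: w ⊆ s →
      (a :: w).Sublist (s.filter (a ≤ ·) ++ rep s (weakDescents (a :: w)))
  | a, [], h => by
    simpa [weakDescents, rep] using h
  | a, b :: w, h => by
    have ih := cons_sublist_filter_append_rep hs (List.cons_subset.1 h).2
    by_cases hba : b ≤ a
    · rw [weakDescents_cons_cons, if_pos hba, add_comm, rep_succ, ← List.singleton_append]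
      refine List.Sublist.append ?_ (ih.trans ?_)
      · simpa using (List.cons_subset.1 h).1
      · exact (List.filter_sublist).append_right _
    · have hsuffix : (a :: s.filter (b ≤ ·)).Sublist (s.filter (a ≤ ·)) := by
        refine sublist_of_pairwise_of_subset ?_ (hs.filter _) ?_
        · refine List.pairwise_cons.2 ⟨fun x hx => ?_, hs.filter _⟩
          simp only [List.mem_filter, decide_eq_true_eq] at hx
          omega
        · intro x hx
          simp only [List.mem_cons, List.mem_filter, decide_eq_true_eq] at hx ⊢
          rcases hx with rfl | ⟨hx, hbx⟩
          · exact ⟨List.cons_subset.1 h |>.1, le_rfl⟩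
          · exact ⟨hx, by omega⟩
      rw [weakDescents_cons_cons, if_neg hba, zero_add]
      exact (ih.cons_cons a).trans (hsuffix.append_right _)

lemma sublist_rep_succ_weakDescents {s w : List ℕ} (hs : s.Pairwise (· < ·)) (hw : w ≠ [])
    (h : w ⊆ s) : w.Sublist (rep s (weakDescents w + 1)) := by
  obtain ⟨a, w, rfl⟩ := List.exists_cons_of_ne_nil hw
  rw [rep_succ]
  exact (cons_sublist_filter_append_rep hs h).trans (List.filter_sublist.append_right _)

lemma weakDescents_cons_append_reverse {a b : ℕ} {r : List ℕ} (h : (b :: r).Nodup) :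
    weakDescents (a :: ((b :: r) ++ (b :: r).reverse)) =
      (if b ≤ a then 1 else 0) + (r.length + 1) := by
  rw [List.cons_append, weakDescents_cons_cons, ← List.cons_append,
    weakDescents_append_reverse h (List.cons_ne_nil _ _), List.length_cons]

theorem cons_cons_append_reverse_sublist_rep_append_reverse_iff {s r : List ℕ} {a b : ℕ}
    (hs : s.Pairwise (· < ·)) (hnd : (a :: b :: r).Nodup) (hsub : a :: b :: r ⊆ s) :
    ((a :: b :: r) ++ (a :: b :: r).reverse).Sublist (rep s (r.length + 2) ++ s.reverse) ↔
      a < b := by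
  have hsplit : (a :: b :: r) ++ (a :: b :: r).reverse =
      a :: ((b :: r) ++ (b :: r).reverse) ++ [a] := by simp
  have hcount := weakDescents_cons_append_reverse (a := a) hnd.of_cons
  constructor
  · rw [List.sublist_append_iff]
    rintro ⟨w₁, w₂, hw, h₁, h₂⟩
    rcases le_or_gt 2 w₂.length with hlen | hlen
    · have hpal : (a :: b :: r) ++ (a :: b :: r).reverse = w₂.reverse ++ w₁.reverse := by
        rw [← List.reverse_append, ← hw]; simp
      have hpre : w₂.reverse.IsPrefix ((a :: b :: r) ++ (a :: b :: r).reverse) := by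
        rw [hpal]; exact List.prefix_append _ _
      have hab : [a, b].IsPrefix w₂.reverse :=
        List.prefix_of_prefix_length_le (by simp) hpre (by simpa using hlen)
      simpa using hs.sublist (hab.sublist.trans (by simpa using h₂.reverse))
    · rw [hsplit] at hw
      have hlen₁ := congrArg List.length hw
      simp only [List.length_append, List.length_cons, List.length_nil] at hlen₁
      have hpre : (a :: ((b :: r) ++ (b :: r).reverse)).IsPrefix w₁ :=
        List.prefix_of_prefix_length_le (hw ▸ List.prefix_append _ _) (List.prefix_append _ _)
          (by simp only [List.length_append, List.length_cons]; omega)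
      have hle := hpre.weakDescents_le
      have hlt := weakDescents_lt_of_sublist_rep hs (List.ne_nil_of_length_pos (by omega)) h₁
      split_ifs at hcount <;> omega
  · intro hab
    have hk : r.length + 2 = weakDescents (a :: ((b :: r) ++ (b :: r).reverse)) + 1 := by
      rw [hcount, if_neg (not_le.2 hab)]; omega
    have hsub' : a :: ((b :: r) ++ (b :: r).reverse) ⊆ s := fun x hx =>
      hsub (by simp only [List.mem_cons, List.mem_append, List.mem_reverse] at hx ⊢; tauto)
    rw [hsplit, hk]
    exact (sublist_rep_succ_weakDescents hs (List.cons_ne_nil _ _) hsub').append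
      (List.singleton_sublist.2 (List.mem_reverse.2 (hsub List.mem_cons_self)))

lemma Iperm_nodup {c : ℕ} (π : Equiv.Perm (Fin c)) : (Iperm π).Nodup :=
  List.nodup_ofFn.2 fun i j h => π.injective (Fin.ext (by simpa using h))

lemma Iperm_subset_Ic {c : ℕ} (π : Equiv.Perm (Fin c)) : Iperm π ⊆ Ic c := by
  intro x hx
  obtain ⟨i, rfl⟩ := List.mem_ofFn.1 hx
  simp only [Ic, List.mem_range'_1]
  omega

theorem stmt18 (c : ℕ) (hc : 2 ≤ c) (π : Equiv.Perm (Fin c)) :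
    (Iperm π ++ (Iperm π).reverse).Sublist (rep (Ic c) c ++ Dc c) ↔
      π ⟨0, by omega⟩ < π ⟨1, by omega⟩ := by
  obtain ⟨n, rfl⟩ : ∃ n, c = n + 2 := ⟨c - 2, by omega⟩
  have hI : Iperm π = ((π 0).val + 1) :: ((π 1).val + 1) ::
      List.ofFn (fun i : Fin n => (π i.succ.succ).val + 1) := by
    simp [Iperm, List.ofFn_succ]
  have key := cons_cons_append_reverse_sublist_rep_append_reverse_iff (pairwise_Ic (n + 2))
    (hI ▸ Iperm_nodup π) (hI ▸ Iperm_subset_Ic π)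
  rw [List.length_ofFn, ← hI] at key
  rw [Dc, key, Nat.add_lt_add_iff_right, ← Fin.lt_def]
  rfl
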